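/- arXiv:1801.05104 — 4 statements merged into one kernel-verified Lean document; each statement's English description precedes it below -/
import Mathlib

section
/- Let C be a clique of the CRAN-IDNC graph, let (b, z, u, f, r) ∈ C, and let K = {f' ∈ F : ∃ u', r' with (b, z, u', f', r') ∈ C} be the set of files scheduled at resource block (b, z) by C. Then K ∩ W(u) = {f}: the file combination transmitted at (b, z) contains exactly one file wanted by each of its targeted users. -/
/-- A vertex of the CRAN-IDNC graph: a tuple (b, z, u, f, r). -/
structure CV (B Z U F : Type*) where
  b : B
  z : Z
  u : U
  f : F
  r : ℝ


noncomputable instance {B Z U F : Type*} : DecidableEq (CV B Z U F) :=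
  Classical.decEq _

variable {B Z U F : Type*}

/-- `v` is a valid vertex: `f ∈ W(u)`, `r ∈ R`, and `r ≤ cap(b, z, u)`. -/
def IsVertex (W : U → Finset F) (Rset : Finset ℝ) (cap : B → Z → U → ℝ)
    (v : CV B Z U F) : Prop :=
  v.f ∈ W v.u ∧ v.r ∈ Rset ∧ v.r ≤ cap v.b v.z v.u

/-- Adjacency in the CRAN-IDNC graph. -/
def Adj (H : U → Finset F) (v v' : CV B Z U F) : Prop :=
  v ≠ v' ∧
    (((v.b, v.z) = (v'.b, v'.z) ∧
        ((v.f = v'.f ∨ (v.f ∈ H v'.u ∧ v'.f ∈ H v.u)) ∧ v.r = v'.r)) ∨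
      ((v.b, v.z) ≠ (v'.b, v'.z) ∧
        ((v.u = v'.u ∧ v.b = v'.b) ∨
          (v.b = v'.b ∧ (v.f = v'.f ∨ (v.f ∈ H v'.u ∧ v'.f ∈ H v.u))) ∨
          v.u ≠ v'.u)))

/-- A clique of the CRAN-IDNC graph: a finite set of valid vertices that are
pairwise adjacent. -/
def IsClique (H W : U → Finset F) (Rset : Finset ℝ) (cap : B → Z → U → ℝ)
    (C : Finset (CV B Z U F)) : Prop :=
  (∀ v ∈ C, IsVertex W Rset cap v) ∧
    ∀ v ∈ C, ∀ v' ∈ C, v ≠ v' → Adj H v v'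

/-! Two vertices of a clique at the same resource block satisfy [LC1], so a file `f'` scheduled
there and wanted by `u` is either `f` itself or lies in `H(u)`; the latter is excluded by
`H(u) ∩ W(u) = ∅`. -/

theorem Adj.file_eq_or_mem_has_of_same_block {H : U → Finset F} {v v' : CV B Z U F}
    (h : Adj H v v') (hbz : (v.b, v.z) = (v'.b, v'.z)) :
    v.f = v'.f ∨ (v.f ∈ H v'.u ∧ v'.f ∈ H v.u) := by
  rcases h with ⟨-, ⟨-, hfiles, -⟩ | ⟨hne, -⟩⟩
  · exact hfiles
  · exact absurd hbz hne

theorem IsClique.file_eq_of_same_block_of_mem_wants {H W : U → Finset F} {Rset : Finset ℝ}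
    {cap : B → Z → U → ℝ} {C : Finset (CV B Z U F)} {v v' : CV B Z U F}
    (hDisj : Disjoint (H v.u) (W v.u)) (hC : IsClique H W Rset cap C) (hv : v ∈ C)
    (hv' : v' ∈ C) (hb : v'.b = v.b) (hz : v'.z = v.z) (hw : v'.f ∈ W v.u) :
    v'.f = v.f := by
  by_cases hvv : v' = v
  · rw [hvv]
  · rcases (hC.2 v' hv' v hv hvv).file_eq_or_mem_has_of_same_block (by rw [hb, hz]) with
      hf | ⟨hH, -⟩
    · exact hf
    · exact absurd hw (Finset.disjoint_left.mp hDisj hH)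

theorem clique_kappa_inter_wants_general {B Z U F : Type*}
    (H W : U → Finset F) (Rset : Finset ℝ) (cap : B → Z → U → ℝ)
    (hDisj : ∀ u, Disjoint (H u) (W u))
    (C : Finset (CV B Z U F)) (hC : IsClique H W Rset cap C)
    (v : CV B Z U F) (hv : v ∈ C) :
    {f : F | ∃ v' ∈ C, v'.b = v.b ∧ v'.z = v.z ∧ v'.f = f} ∩ ↑(W v.u) =
      {v.f} := by
  ext g
  constructor
  · rintro ⟨⟨v', hv', hb, hz, rfl⟩, hg⟩
    exact hC.file_eq_of_same_block_of_mem_wants (hDisj v.u) hv hv' hb hz hg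
  · rintro rfl
    exact ⟨⟨v, hv, rfl, rfl, rfl⟩, (hC.1 v hv).1⟩

/-- In any clique, the file combination transmitted at the resource block of a
vertex `v` contains exactly one file wanted by the user of `v`, namely `v.f`. -/
theorem clique_kappa_inter_wants {B Z U F : Type*}
    (H W : U → Finset F) (Rset : Finset ℝ) (cap : B → Z → U → ℝ)
    (hDisj : ∀ u, Disjoint (H u) (W u)) (hRpos : ∀ r ∈ Rset, 0 < r)
    (C : Finset (CV B Z U F)) (hC : IsClique H W Rset cap C)
    (v : CV B Z U F) (hv : v ∈ C) :
    {f : F | ∃ v' ∈ C, v'.b = v.b ∧ v'.z = v.z ∧ v'.f = f} ∩ ↑(W v.u) =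
      {v.f} :=
  clique_kappa_inter_wants_general H W Rset cap hDisj C hC v hv
end

section
/- Every clique C of the CRAN-IDNC graph induces a feasible schedule: defining τ_C(b, z) = {u ∈ U : ∃ f, r with (b, z, u, f, r) ∈ C}, κ_C(b, z) = {f ∈ F : ∃ u, r with (b, z, u, f, r) ∈ C}, and, when τ_C(b, z) ≠ ∅, r_C(b, z) as the common rate of the vertices of C at (b, z), the triple (τ_C, κ_C, r_C) satisfies all the feasibility conditions (i)–(iv) of a feasible schedule. -/
variable {B Z U F : Type*}

/-- The feasibility conditions (i)–(iv) of a schedule `(τ, κ, rate)`: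
(i) each user is served by at most one RRH; (ii) the combination `κ (b, z)`
contains exactly one wanted file of each targeted user and all its other files
are in that user's Has set; (iii) the rate does not exceed the capacity of any
targeted user (and lies in `Rset` whenever the block is used); and (iv) the
combination consists exactly of the wanted files of the targeted users. -/
def Feasible [DecidableEq F] (H W : U → Finset F) (Rset : Finset ℝ)
    (cap : B → Z → U → ℝ) (τ : B → Z → Finset U) (κ : B → Z → Finset F)
    (rate : B → Z → ℝ) : Prop :=
  (∀ b z, (τ b z).Nonempty → rate b z ∈ Rset) ∧
  (∀ b z b' z' u, u ∈ τ b z → u ∈ τ b' z' → b = b') ∧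
  (∀ b z u, u ∈ τ b z → ∃ f, κ b z ∩ W u = {f} ∧ κ b z \ {f} ⊆ H u) ∧
  (∀ b z u, u ∈ τ b z → rate b z ≤ cap b z u) ∧
  (∀ b z, κ b z = (τ b z).biUnion fun u => κ b z ∩ W u)

/-- The set of users targeted at resource block `(b, z)` by the clique `C`. -/
def cliqueTau [DecidableEq B] [DecidableEq Z] [DecidableEq U]
    (C : Finset (CV B Z U F)) (b : B) (z : Z) : Finset U :=
  (C.filter fun v => v.b = b ∧ v.z = z).image CV.u

/-- The file combination scheduled at resource block `(b, z)` by the clique `C`. -/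
def cliqueKappa [DecidableEq B] [DecidableEq Z] [DecidableEq F]
    (C : Finset (CV B Z U F)) (b : B) (z : Z) : Finset F :=
  (C.filter fun v => v.b = b ∧ v.z = z).image CV.f


/-!
Two vertices of a clique on the same resource block cannot be joined under the rules
[GC1]–[GC3], so [LC1] and [LC2] hold between them: all vertices of a block share one rate,
and any two of their files are either equal or each in the other user's Has set. Since Has and
Wants sets are disjoint, the only wanted file of a targeted user in the block's combination is
the one of its own vertex. Two vertices of one user on different blocks can only be joined
under [GC1] or [GC2], both of which force the same RRH.
-/

/-- Condition [LC1]. -/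
def FileCompatible (H : U → Finset F) (v v' : CV B Z U F) : Prop :=
  v.f = v'.f ∨ (v.f ∈ H v'.u ∧ v'.f ∈ H v.u)

theorem FileCompatible.refl (H : U → Finset F) (v : CV B Z U F) : FileCompatible H v v :=
  Or.inl rfl

theorem Adj.fileCompatible_and_r_eq {H : U → Finset F} {v v' : CV B Z U F} (h : Adj H v v')
    (hb : v.b = v'.b) (hz : v.z = v'.z) : FileCompatible H v v' ∧ v.r = v'.r := by
  rcases h.2 with ⟨-, hLC⟩ | ⟨hne, -⟩
  · exact hLC
  · exact absurd (by rw [hb, hz]) hne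

theorem Adj.b_eq_of_u_eq {H : U → Finset F} {v v' : CV B Z U F} (h : Adj H v v')
    (hu : v.u = v'.u) : v.b = v'.b := by
  rcases h.2 with ⟨hbz, -⟩ | ⟨-, ⟨-, hb⟩ | ⟨hb, -⟩ | hne⟩
  · exact (Prod.ext_iff.1 hbz).1
  · exact hb
  · exact hb
  · exact absurd hu hne

section PairwiseAdj

variable {H : U → Finset F} {C : Finset (CV B Z U F)}
  (hC : (C : Set (CV B Z U F)).Pairwise (Adj H))
include hC

theorem fileCompatible_of_pairwise_adj {v v' : CV B Z U F} (hv : v ∈ C) (hv' : v' ∈ C)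
    (hb : v.b = v'.b) (hz : v.z = v'.z) : FileCompatible H v v' := by
  obtain rfl | hne := eq_or_ne v v'
  · exact FileCompatible.refl H v
  · exact ((hC hv hv' hne).fileCompatible_and_r_eq hb hz).1

theorem r_eq_of_pairwise_adj {v v' : CV B Z U F} (hv : v ∈ C) (hv' : v' ∈ C)
    (hb : v.b = v'.b) (hz : v.z = v'.z) : v.r = v'.r := by
  obtain rfl | hne := eq_or_ne v v'
  · rfl
  · exact ((hC hv hv' hne).fileCompatible_and_r_eq hb hz).2

theorem b_eq_of_pairwise_adj {v v' : CV B Z U F} (hv : v ∈ C) (hv' : v' ∈ C)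
    (hu : v.u = v'.u) : v.b = v'.b := by
  obtain rfl | hne := eq_or_ne v v'
  · rfl
  · exact (hC hv hv' hne).b_eq_of_u_eq hu

theorem exists_rate_of_pairwise_adj :
    ∃ rate : B → Z → ℝ, ∀ v ∈ C, rate v.b v.z = v.r := by
  have hfac : Function.FactorsThrough (fun v : C => v.1.r) (fun v : C => (v.1.b, v.1.z)) :=
    fun v v' h => r_eq_of_pairwise_adj hC v.2 v'.2 (Prod.ext_iff.1 h).1 (Prod.ext_iff.1 h).2
  exact ⟨fun b z => Function.extend (fun v : C => (v.1.b, v.1.z)) (fun v => v.1.r) 0 (b, z),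
    fun v hv => hfac.extend_apply 0 ⟨v, hv⟩⟩

end PairwiseAdj

section Schedule

variable [DecidableEq B] [DecidableEq Z] {C : Finset (CV B Z U F)} {b : B} {z : Z}

theorem mem_cliqueTau [DecidableEq U] {u : U} :
    u ∈ cliqueTau C b z ↔ ∃ v ∈ C, v.b = b ∧ v.z = z ∧ v.u = u := by
  simp [cliqueTau, and_assoc]

theorem mem_cliqueKappa [DecidableEq F] {f : F} :
    f ∈ cliqueKappa C b z ↔ ∃ v ∈ C, v.b = b ∧ v.z = z ∧ v.f = f := by
  simp [cliqueKappa, and_assoc]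

variable [DecidableEq F] {H W : U → Finset F} {v : CV B Z U F}

theorem cliqueKappa_inter_eq_singleton (hC : (C : Set (CV B Z U F)).Pairwise (Adj H))
    (hDisj : Disjoint (H v.u) (W v.u)) (hv : v ∈ C) (hW : v.f ∈ W v.u) :
    cliqueKappa C v.b v.z ∩ W v.u = {v.f} := by
  ext f
  simp only [Finset.mem_inter, Finset.mem_singleton]
  refine ⟨fun ⟨hf, hfW⟩ => ?_,
    fun hf => hf ▸ ⟨mem_cliqueKappa.2 ⟨v, hv, rfl, rfl, rfl⟩, hW⟩⟩
  obtain ⟨v', hv', hb, hz, rfl⟩ := mem_cliqueKappa.1 hf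
  rcases fileCompatible_of_pairwise_adj hC hv hv' hb.symm hz.symm with heq | ⟨-, hH⟩
  · exact heq.symm
  · exact absurd hfW (Finset.disjoint_left.1 hDisj hH)

theorem cliqueKappa_sdiff_subset (hC : (C : Set (CV B Z U F)).Pairwise (Adj H)) (hv : v ∈ C) :
    cliqueKappa C v.b v.z \ {v.f} ⊆ H v.u := by
  intro f hf
  obtain ⟨hf, hne⟩ := Finset.mem_sdiff.1 hf
  obtain ⟨v', hv', hb, hz, rfl⟩ := mem_cliqueKappa.1 hf
  rcases fileCompatible_of_pairwise_adj hC hv hv' hb.symm hz.symm with heq | ⟨-, hH⟩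
  · exact absurd (Finset.mem_singleton.2 heq.symm) hne
  · exact hH

theorem cliqueKappa_eq_biUnion [DecidableEq U] (hW : ∀ v ∈ C, v.f ∈ W v.u) :
    cliqueKappa C b z = (cliqueTau C b z).biUnion fun u => cliqueKappa C b z ∩ W u := by
  ext f
  simp only [Finset.mem_biUnion, Finset.mem_inter]
  refine ⟨fun hf => ?_, fun ⟨_, _, hf, _⟩ => hf⟩
  obtain ⟨v, hv, hb, hz, rfl⟩ := mem_cliqueKappa.1 hf
  exact ⟨v.u, mem_cliqueTau.2 ⟨v, hv, hb, hz, rfl⟩, hf, hW v hv⟩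

end Schedule

theorem clique_induces_feasible_schedule_general {B Z U F : Type*}
    [DecidableEq B] [DecidableEq Z] [DecidableEq U] [DecidableEq F]
    (H W : U → Finset F) (Rset : Finset ℝ) (cap : B → Z → U → ℝ)
    (hDisj : ∀ u, Disjoint (H u) (W u))
    (C : Finset (CV B Z U F)) (hC : IsClique H W Rset cap C) :
    ∃ rate : B → Z → ℝ, (∀ v ∈ C, rate v.b v.z = v.r) ∧
      Feasible H W Rset cap (cliqueTau C) (cliqueKappa C) rate := by
  obtain ⟨hVert, hAdj⟩ := hC
  obtain ⟨rate, hrate⟩ := exists_rate_of_pairwise_adj hAdj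
  refine ⟨rate, hrate, ?_, ?_, ?_, ?_,
    fun _ _ => cliqueKappa_eq_biUnion fun v hv => (hVert v hv).1⟩
  · rintro b z ⟨u, hu⟩
    obtain ⟨v, hv, rfl, rfl, -⟩ := mem_cliqueTau.1 hu
    exact hrate v hv ▸ (hVert v hv).2.1
  · intro b z b' z' u hu hu'
    obtain ⟨v, hv, rfl, -, rfl⟩ := mem_cliqueTau.1 hu
    obtain ⟨v', hv', rfl, -, hu⟩ := mem_cliqueTau.1 hu'
    exact b_eq_of_pairwise_adj hAdj hv hv' hu.symm
  · intro b z u hu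
    obtain ⟨v, hv, rfl, rfl, rfl⟩ := mem_cliqueTau.1 hu
    exact ⟨v.f, cliqueKappa_inter_eq_singleton hAdj (hDisj v.u) hv (hVert v hv).1,
      cliqueKappa_sdiff_subset hAdj hv⟩
  · intro b z u hu
    obtain ⟨v, hv, rfl, rfl, rfl⟩ := mem_cliqueTau.1 hu
    exact hrate v hv ▸ (hVert v hv).2.2

/-- Every clique of the CRAN-IDNC graph induces a feasible schedule
`(cliqueTau C, cliqueKappa C, rate)`, where `rate` is the common rate of the
vertices of `C` at each occupied resource block. -/
theorem clique_induces_feasible_schedule {B Z U F : Type*}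
    [DecidableEq B] [DecidableEq Z] [DecidableEq U] [DecidableEq F]
    (H W : U → Finset F) (Rset : Finset ℝ) (cap : B → Z → U → ℝ)
    (hDisj : ∀ u, Disjoint (H u) (W u)) (hRpos : ∀ r ∈ Rset, 0 < r)
    (C : Finset (CV B Z U F)) (hC : IsClique H W Rset cap C) :
    ∃ rate : B → Z → ℝ, (∀ v ∈ C, rate v.b v.z = v.r) ∧
      Feasible H W Rset cap (cliqueTau C) (cliqueKappa C) rate :=
  clique_induces_feasible_schedule_general H W Rset cap hDisj C hC
end

section
/- For every clique C of the CRAN-IDNC graph, the total weight of the clique equals the throughput of its induced schedule: ∑_{(b,z,u,f,r) ∈ C} r = ∑_{(b,z) : τ_C(b,z) ≠ ∅} |τ_C(b, z)| · r_C(b, z), where τ_C(b, z) = {u ∈ U : ∃ f, r with (b, z, u, f, r) ∈ C} and r_C(b, z) is the common rate of the vertices of C at (b, z). -/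
variable {B Z U F : Type*}

section Clique

variable {H W : U → Finset F} {Rset : Finset ℝ} {cap : B → Z → U → ℝ} {C : Finset (CV B Z U F)}

/-- Two vertices of a clique in one block have the same rate, and for the same user also the same
file, since the alternative `f ∈ H u` contradicts `f ∈ W u`. -/
theorem IsClique.eq_of_block_eq_of_u_eq (hDisj : ∀ u, Disjoint (H u) (W u))
    (hC : IsClique H W Rset cap C) {v v' : CV B Z U F} (hv : v ∈ C) (hv' : v' ∈ C)
    (hb : v.b = v'.b) (hz : v.z = v'.z) (hu : v.u = v'.u) : v = v' := by
  by_contra hne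
  obtain ⟨-, ⟨-, hf, hr⟩ | ⟨hbz, -⟩⟩ := hC.2 v hv v' hv' hne
  · rcases hf with hf | ⟨hf, -⟩
    · cases v; cases v'
      simp_all
    · exact Finset.disjoint_left.mp (hDisj v.u) (hu ▸ hf) (hC.1 v hv).1
  · exact hbz (by rw [hb, hz])

theorem IsClique.card_cliqueTau [DecidableEq B] [DecidableEq Z] [DecidableEq U]
    (hDisj : ∀ u, Disjoint (H u) (W u)) (hC : IsClique H W Rset cap C) (b : B) (z : Z) :
    (cliqueTau C b z).card = (C.filter fun v => v.b = b ∧ v.z = z).card := by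
  refine Finset.card_image_of_injOn fun v hv v' hv' hu => ?_
  simp only [Finset.coe_filter, Set.mem_ofPred_eq] at hv hv'
  exact hC.eq_of_block_eq_of_u_eq hDisj hv.1 hv'.1 (hv.2.1.trans hv'.2.1.symm)
    (hv.2.2.trans hv'.2.2.symm) hu

end Clique

theorem sum_r_eq_sum_card_block_mul_rate [Fintype B] [Fintype Z] [DecidableEq B] [DecidableEq Z]
    (C : Finset (CV B Z U F)) (rate : B → Z → ℝ) (hrate : ∀ v ∈ C, rate v.b v.z = v.r) :
    ∑ v ∈ C, v.r =
      ∑ p : B × Z, ((C.filter fun v => v.b = p.1 ∧ v.z = p.2).card : ℝ) * rate p.1 p.2 := by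
  rw [← Finset.sum_fiberwise C (fun v => (v.b, v.z)) CV.r]
  refine Finset.sum_congr rfl fun p _ => ?_
  simp only [Prod.ext_iff]
  rw [← nsmul_eq_mul, ← Finset.sum_const]
  refine Finset.sum_congr rfl fun v hv => ?_
  obtain ⟨hvC, hb, hz⟩ := Finset.mem_filter.mp hv
  rw [← hb, ← hz, hrate v hvC]

theorem clique_weight_eq_throughput_general {B Z U F : Type*}
    [Fintype B] [Fintype Z] [DecidableEq B] [DecidableEq Z] [DecidableEq U]
    (H W : U → Finset F) (Rset : Finset ℝ) (cap : B → Z → U → ℝ)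
    (hDisj : ∀ u, Disjoint (H u) (W u))
    (C : Finset (CV B Z U F)) (hC : IsClique H W Rset cap C)
    (rate : B → Z → ℝ) (hrate : ∀ v ∈ C, rate v.b v.z = v.r) :
    ∑ v ∈ C, v.r =
      ∑ p ∈ Finset.univ.filter (fun p : B × Z => (cliqueTau C p.1 p.2).Nonempty),
        ((cliqueTau C p.1 p.2).card : ℝ) * rate p.1 p.2 := by
  rw [sum_r_eq_sum_card_block_mul_rate C rate hrate]
  simp only [← hC.card_cliqueTau hDisj]
  refine (Finset.sum_filter_of_ne fun p _ hp => Finset.card_ne_zero.mp ?_).symm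
  exact_mod_cast left_ne_zero_of_mul hp

/-- The weight of a clique equals the throughput of its induced schedule. -/
theorem clique_weight_eq_throughput {B Z U F : Type*}
    [Fintype B] [Fintype Z] [DecidableEq B] [DecidableEq Z] [DecidableEq U]
    (H W : U → Finset F) (Rset : Finset ℝ) (cap : B → Z → U → ℝ)
    (hDisj : ∀ u, Disjoint (H u) (W u)) (hRpos : ∀ r ∈ Rset, 0 < r)
    (C : Finset (CV B Z U F)) (hC : IsClique H W Rset cap C)
    (rate : B → Z → ℝ) (hrate : ∀ v ∈ C, rate v.b v.z = v.r) :
    ∑ v ∈ C, v.r =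
      ∑ p ∈ Finset.univ.filter (fun p : B × Z => (cliqueTau C p.1 p.2).Nonempty),
        ((cliqueTau C p.1 p.2).card : ℝ) * rate p.1 p.2 :=
  clique_weight_eq_throughput_general H W Rset cap hDisj C hC rate hrate
end

section
/- Every feasible schedule (τ, κ, r) induces a clique of the CRAN-IDNC graph: the set C = {(b, z, u, f_u, r(b, z)) : (b, z) ∈ B × Z, u ∈ τ(b, z)}, where f_u denotes the unique element of κ(b, z) ∩ W(u), is a clique, and its weight ∑_{v ∈ C} (rate of v) equals the throughput ∑_{(b,z) : τ(b,z) ≠ ∅} |τ(b, z)| · r(b, z) of the schedule. -/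
variable {B Z U F : Type*}

/-- The clique induced by a schedule `(τ, κ, rate)`: it consists of the vertices
`(b, z, u, f_u, rate b z)` where `u ∈ τ (b, z)` and `f_u` is the unique element
of `κ (b, z) ∩ W u`. -/
noncomputable def schedClique [Fintype B] [Fintype Z] [Fintype U] [Fintype F]
    [DecidableEq B] [DecidableEq Z] [DecidableEq U] [DecidableEq F]
    (W : U → Finset F) (τ : B → Z → Finset U) (κ : B → Z → Finset F)
    (rate : B → Z → ℝ) : Finset (CV B Z U F) :=
  ((Finset.univ : Finset (B × Z × U × F)).filter fun p =>
      p.2.2.1 ∈ τ p.1 p.2.1 ∧ p.2.2.2 ∈ κ p.1 p.2.1 ∧ p.2.2.2 ∈ W p.2.2.1).image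
    fun p => ⟨p.1, p.2.1, p.2.2.1, p.2.2.2, rate p.1 p.2.1⟩

/-!
Each targeted user `u ∈ τ (b, z)` contributes exactly one vertex, because `κ (b, z) ∩ W u` is a
singleton; so the weight of the induced set is `∑ |τ (b, z)| · r (b, z)`. Two vertices on the same
block share the rate `r (b, z)`, and if their files differ, each file lies in `κ (b, z)` minus the
other user's wanted file, hence in the other user's Has set. Vertices on different blocks are
adjacent unless they serve the same user, and then condition (i) puts them on the same RRH.
-/

open Finset

section schedClique

variable [Fintype B] [Fintype Z] [Fintype U] [Fintype F]
  [DecidableEq B] [DecidableEq Z] [DecidableEq U] [DecidableEq F]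
  {W : U → Finset F} {τ : B → Z → Finset U} {κ : B → Z → Finset F} {rate : B → Z → ℝ}

theorem mem_schedClique {v : CV B Z U F} :
    v ∈ schedClique W τ κ rate ↔
      v.u ∈ τ v.b v.z ∧ v.f ∈ κ v.b v.z ∩ W v.u ∧ v.r = rate v.b v.z := by
  constructor
  · simp only [schedClique, mem_image, mem_filter]
    rintro ⟨p, ⟨-, hu, hf, hfw⟩, rfl⟩
    exact ⟨hu, mem_inter.2 ⟨hf, hfw⟩, rfl⟩
  · rintro ⟨hu, hf, hr⟩
    rw [mem_inter] at hf
    simp only [schedClique, mem_image, mem_filter]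
    exact ⟨(v.b, v.z, v.u, v.f), ⟨mem_univ _, hu, hf⟩, by cases v; dsimp only at hr ⊢; rw [hr]⟩

theorem sum_r_schedClique :
    ∑ v ∈ schedClique W τ κ rate, v.r =
      ∑ b, ∑ z, ∑ u ∈ τ b z, ((κ b z ∩ W u).card : ℝ) * rate b z := by
  have hinj : Function.Injective fun p : B × Z × U × F =>
      (⟨p.1, p.2.1, p.2.2.1, p.2.2.2, rate p.1 p.2.1⟩ : CV B Z U F) := by
    rintro ⟨b, z, u, f⟩ ⟨b', z', u', f'⟩ h
    obtain ⟨rfl, rfl, rfl, rfl, -⟩ := CV.mk.inj h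
    rfl
  rw [schedClique, sum_image hinj.injOn, sum_filter]
  simp only [Fintype.sum_prod_type, ite_and, ← mem_inter, sum_ite_irrel, sum_const_zero,
    sum_ite_mem, univ_inter, sum_const, nsmul_eq_mul]

end schedClique

namespace Feasible

variable [DecidableEq F] {H W : U → Finset F} {Rset : Finset ℝ}
  {cap : B → Z → U → ℝ} {τ : B → Z → Finset U} {κ : B → Z → Finset F} {rate : B → Z → ℝ}

theorem card_inter_eq_one (hfeas : Feasible H W Rset cap τ κ rate) {b : B} {z : Z} {u : U}
    (hu : u ∈ τ b z) : (κ b z ∩ W u).card = 1 := by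
  obtain ⟨f, hf, -⟩ := hfeas.2.2.1 b z u hu
  rw [hf, card_singleton]

theorem mem_has_of_ne (hfeas : Feasible H W Rset cap τ κ rate) {b : B} {z : Z} {u' : U}
    {f f' : F} (hu' : u' ∈ τ b z) (hf : f ∈ κ b z) (hf' : f' ∈ κ b z ∩ W u') (hne : f ≠ f') :
    f ∈ H u' := by
  obtain ⟨g, hg, hsub⟩ := hfeas.2.2.1 b z u' hu'
  rw [hg, mem_singleton] at hf'
  exact hsub (mem_sdiff.2 ⟨hf, by rwa [mem_singleton, ← hf']⟩)

variable [Fintype B] [Fintype Z] [Fintype U] [Fintype F]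
  [DecidableEq B] [DecidableEq Z] [DecidableEq U]

theorem isVertex_of_mem_schedClique (hfeas : Feasible H W Rset cap τ κ rate)
    {v : CV B Z U F} (hv : v ∈ schedClique W τ κ rate) : IsVertex W Rset cap v := by
  obtain ⟨hu, hf, hr⟩ := mem_schedClique.1 hv
  exact ⟨(mem_inter.1 hf).2, hr ▸ hfeas.1 _ _ ⟨_, hu⟩, hr ▸ hfeas.2.2.2.1 _ _ _ hu⟩

theorem adj_of_mem_schedClique (hfeas : Feasible H W Rset cap τ κ rate)
    {v v' : CV B Z U F} (hv : v ∈ schedClique W τ κ rate) (hv' : v' ∈ schedClique W τ κ rate)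
    (hne : v ≠ v') : Adj H v v' := by
  obtain ⟨b, z, u, f, r⟩ := v
  obtain ⟨b', z', u', f', r'⟩ := v'
  obtain ⟨hu, hf, hr⟩ := mem_schedClique.1 hv
  obtain ⟨hu', hf', hr'⟩ := mem_schedClique.1 hv'
  dsimp only at hu hf hr hu' hf' hr'
  subst hr hr'
  refine ⟨hne, ?_⟩
  by_cases hbz : (b, z) = (b', z')
  · obtain ⟨rfl, rfl⟩ := Prod.mk.inj hbz
    refine Or.inl ⟨rfl, ?_, rfl⟩
    by_cases hff : f = f'
    · exact Or.inl hff
    · exact Or.inr ⟨hfeas.mem_has_of_ne hu' (mem_inter.1 hf).1 hf' hff,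
        hfeas.mem_has_of_ne hu (mem_inter.1 hf').1 hf (Ne.symm hff)⟩
  · refine Or.inr ⟨hbz, ?_⟩
    by_cases huu : u = u'
    · subst huu
      exact Or.inl ⟨rfl, hfeas.2.1 _ _ _ _ _ hu hu'⟩
    · exact Or.inr (Or.inr huu)

end Feasible

theorem schedule_induces_clique_general {B Z U F : Type*}
    [Fintype B] [Fintype Z] [Fintype U] [Fintype F]
    [DecidableEq B] [DecidableEq Z] [DecidableEq U] [DecidableEq F]
    (H W : U → Finset F) (Rset : Finset ℝ) (cap : B → Z → U → ℝ)
    (τ : B → Z → Finset U) (κ : B → Z → Finset F) (rate : B → Z → ℝ)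
    (hfeas : Feasible H W Rset cap τ κ rate) :
    IsClique H W Rset cap (schedClique W τ κ rate) ∧
      ∑ v ∈ schedClique W τ κ rate, v.r =
        ∑ p ∈ Finset.univ.filter (fun p : B × Z => (τ p.1 p.2).Nonempty),
          ((τ p.1 p.2).card : ℝ) * rate p.1 p.2 := by
  refine ⟨⟨fun v hv => hfeas.isVertex_of_mem_schedClique hv,
    fun v hv v' hv' hne => hfeas.adj_of_mem_schedClique hv hv' hne⟩, ?_⟩
  have hblock : ∀ b z, ∑ u ∈ τ b z, ((κ b z ∩ W u).card : ℝ) * rate b z =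
      ((τ b z).card : ℝ) * rate b z := by
    intro b z
    rw [sum_congr rfl fun u hu => by rw [hfeas.card_inter_eq_one hu, Nat.cast_one, one_mul],
      sum_const, nsmul_eq_mul]
  have hidle : ∀ p ∈ (univ : Finset (B × Z)),
      ((τ p.1 p.2).card : ℝ) * rate p.1 p.2 ≠ 0 → (τ p.1 p.2).Nonempty :=
    fun p _ h => nonempty_iff_ne_empty.2 fun hempty => h (by simp [hempty])
  simp only [sum_r_schedClique, hblock, sum_filter_of_ne hidle, Fintype.sum_prod_type]

/-- Every feasible schedule induces a clique of the CRAN-IDNC graph, whose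
weight equals the throughput of the schedule. -/
theorem schedule_induces_clique {B Z U F : Type*}
    [Fintype B] [Fintype Z] [Fintype U] [Fintype F]
    [DecidableEq B] [DecidableEq Z] [DecidableEq U] [DecidableEq F]
    (H W : U → Finset F) (Rset : Finset ℝ) (cap : B → Z → U → ℝ)
    (hDisj : ∀ u, Disjoint (H u) (W u)) (hRpos : ∀ r ∈ Rset, 0 < r)
    (τ : B → Z → Finset U) (κ : B → Z → Finset F) (rate : B → Z → ℝ)
    (hfeas : Feasible H W Rset cap τ κ rate) :
    IsClique H W Rset cap (schedClique W τ κ rate) ∧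
      ∑ v ∈ schedClique W τ κ rate, v.r =
        ∑ p ∈ Finset.univ.filter (fun p : B × Z => (τ p.1 p.2).Nonempty),
          ((τ p.1 p.2).card : ℝ) * rate p.1 p.2 :=
  schedule_induces_clique_general H W Rset cap τ κ rate hfeas
end
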